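/- arXiv:2305.04963 — 2 statements merged into one kernel-verified Lean document; each statement's English description precedes it below -/
import Mathlib

section
/- Every automorphism of the CFI basic block χ_k that fixes each color class setwise and fixes each pair {a_i, b_i} setwise is determined by a subset S ⊆ {1,...,k} of even cardinality: it swaps a_i and b_i exactly for i ∈ S; conversely, every even-cardinality subset S determines such an automorphism. Hence χ_k has exactly 2^(k-1) such automorphisms. -/
/-- Hamming weight of a k-bit string. -/
def bitWeight {k : ℕ} (b : Fin k → Bool) : ℕ :=
  (Finset.univ.filter (fun i => b i = true)).card

/-- Vertices of the CFI basic block χ_k: one vertex for each k-bit string of even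
weight, plus the bit vertices a_i = (i, false) and b_i = (i, true). -/
def CFIVert (k : ℕ) : Type :=
  {b : Fin k → Bool // Even (bitWeight b)} ⊕ (Fin k × Bool)

/-- Adjacency of χ_k: string vertex x_b is adjacent to a_i if bit i of b is 0
and to b_i if bit i of b is 1. -/
def cfiAdj {k : ℕ} : CFIVert k → CFIVert k → Prop
  | Sum.inl b, Sum.inr p => b.1 p.1 = p.2
  | Sum.inr p, Sum.inl b => b.1 p.1 = p.2
  | _, _ => False

/-- Colors of χ_k: all string vertices share one color; the pair {a_i, b_i} has color i. -/
def cfiColor {k : ℕ} : CFIVert k → Option (Fin k)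
  | Sum.inl _ => none
  | Sum.inr p => some p.1

/-- An automorphism of χ_k fixing each color class setwise (hence each pair {a_i,b_i}
setwise): a permutation preserving adjacency and colors. -/
def IsCFIAut {k : ℕ} (π : Equiv.Perm (CFIVert k)) : Prop :=
  (∀ x y, cfiAdj (π x) (π y) ↔ cfiAdj x y) ∧ ∀ x, cfiColor (π x) = cfiColor x

/-!
An automorphism fixes every pair `{a_i, b_i}`, so on the bit vertices it swaps exactly the pairs
indexed by some `S`. Since `x_b` has exactly one neighbour in each pair, the image of `x_b` is then
forced to be `x_{b ⊕ S}`; for `b = 0` this is `x_S`, so `S` has even size.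
Conversely, flipping by an even `S` preserves the parity of `b`, so it is an automorphism.
Automorphisms thus correspond to even subsets of `Fin k`, and toggling one fixed element pairs the
even subsets with the odd ones, which gives `2 ^ (k - 1)`.
-/

open Finset
open scoped symmDiff

theorem Finset.card_symmDiff_add_two_mul_card_inter {α : Type*} [DecidableEq α] (s t : Finset α) :
    #(s ∆ t) + 2 * #(s ∩ t) = #s + #t := by
  have hsub : s ∩ t ⊆ s ∪ t := inter_subset_union
  rw [symmDiff_eq_sup_sdiff_inf, sup_eq_union, inf_eq_inter, ← card_union_add_card_inter,
    card_sdiff_of_subset hsub]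
  have := card_le_card hsub
  omega

theorem Finset.even_card_symmDiff_iff {α : Type*} [DecidableEq α] (s t : Finset α) :
    Even #(s ∆ t) ↔ (Even #s ↔ Even #t) := by
  rw [← Nat.even_add, ← card_symmDiff_add_two_mul_card_inter, Nat.even_add]
  simp

theorem Fintype.card_even_card_finset (α : Type*) [Fintype α] [DecidableEq α] :
    Fintype.card {s : Finset α // Even #s} = 2 ^ (Fintype.card α - 1) := by
  cases isEmpty_or_nonempty α with
  | inl _ =>
    rw [Fintype.card_eq_zero (α := α), zero_tsub, pow_zero, Fintype.card_eq_one_iff]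
    exact ⟨⟨∅, by simp⟩, fun s => Subtype.ext (Subsingleton.elim _ _)⟩
  | inr h =>
    obtain ⟨a⟩ := h
    have toggle : {s : Finset α // Even #s} ≃ {s : Finset α // ¬ Even #s} :=
      (symmDiff_left_involutive {a}).toPerm.subtypeEquiv fun s => by
        simp [even_card_symmDiff_iff]
    have hsum := Fintype.card_subtype_compl (fun s : Finset α => Even #s)
    rw [← Fintype.card_congr toggle, Fintype.card_finset] at hsum
    have hle := Fintype.card_subtype_le (fun s : Finset α => Even #s)
    rw [Fintype.card_finset] at hle
    have hpow : 2 ^ Fintype.card α = 2 * 2 ^ (Fintype.card α - 1) := by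
      rw [← pow_succ', Nat.sub_add_cancel (Fintype.card_pos_iff.mpr ⟨a⟩)]
    omega

theorem Bool.ite_not_inj {p : Prop} [Decidable p] {a c : Bool} :
    ((if p then !a else a) = if p then !c else c) ↔ a = c := by
  split_ifs <;> simp

theorem Bool.apply_eq_ite_of_injective {g : Bool → Bool} (hg : Function.Injective g) (t : Bool) :
    g t = if g false then !t else t := by
  revert g t
  decide

section CFI

variable {k : ℕ}

def flipBits (S : Finset (Fin k)) (b : Fin k → Bool) : Fin k → Bool :=
  fun i => if i ∈ S then !b i else b i

theorem flipBits_involutive (S : Finset (Fin k)) : Function.Involutive (flipBits S) := by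
  intro b
  funext i
  by_cases hi : i ∈ S <;> simp [flipBits, hi]

theorem bitWeight_flipBits (S : Finset (Fin k)) (b : Fin k → Bool) :
    bitWeight (flipBits S b) = #(({i | b i = true} : Finset (Fin k)) ∆ S) := by
  rw [bitWeight]
  congr 1
  ext i
  by_cases hi : i ∈ S <;> simp [flipBits, hi, mem_symmDiff]

theorem even_bitWeight_flipBits_iff (S : Finset (Fin k)) (b : Fin k → Bool) :
    Even (bitWeight (flipBits S b)) ↔ (Even (bitWeight b) ↔ Even #S) := by
  rw [bitWeight_flipBits, even_card_symmDiff_iff, bitWeight]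

def cfiFlip (S : Finset (Fin k)) (hS : Even #S) : Equiv.Perm (CFIVert k) :=
  Equiv.sumCongr
    ((flipBits_involutive S).toPerm.subtypePerm fun b => by
      simp [even_bitWeight_flipBits_iff, hS])
    (Equiv.prodShear (Equiv.refl _) fun i => if i ∈ S then Equiv.boolNot else Equiv.refl _)

@[simp]
theorem cfiFlip_inl (S : Finset (Fin k)) (hS : Even #S)
    (b : {b : Fin k → Bool // Even (bitWeight b)}) :
    cfiFlip S hS (Sum.inl b) =
      Sum.inl ⟨flipBits S b.1, by simp [even_bitWeight_flipBits_iff, hS, b.2]⟩ :=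
  rfl

@[simp]
theorem cfiFlip_inr (S : Finset (Fin k)) (hS : Even #S) (i : Fin k) (t : Bool) :
    cfiFlip S hS (Sum.inr (i, t)) = Sum.inr (i, if i ∈ S then !t else t) := by
  show Sum.inr (i, (if i ∈ S then Equiv.boolNot else Equiv.refl Bool) t) = _
  split_ifs <;> rfl

theorem isCFIAut_cfiFlip (S : Finset (Fin k)) (hS : Even #S) : IsCFIAut (cfiFlip S hS) := by
  refine ⟨?_, ?_⟩
  · rintro (b | ⟨i, t⟩) (c | ⟨j, u⟩) <;> simp [cfiAdj, flipBits, Bool.ite_not_inj]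
  · rintro (b | ⟨i, t⟩) <;> simp [cfiColor]

open Classical in
noncomputable def cfiFlipSet (π : Equiv.Perm (CFIVert k)) : Finset (Fin k) :=
  {i | π (Sum.inr (i, false)) = Sum.inr (i, true)}

theorem mem_cfiFlipSet {π : Equiv.Perm (CFIVert k)} {i : Fin k} :
    i ∈ cfiFlipSet π ↔ π (Sum.inr (i, false)) = Sum.inr (i, true) := by
  simp [cfiFlipSet]

-- `CFIVert` is not reducible, so `Sum.inr.injEq` does not fire on its elements.
theorem cfiVert_inr_inj {p q : Fin k × Bool} : (Sum.inr p : CFIVert k) = Sum.inr q ↔ p = q :=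
  Sum.inr_injective.eq_iff

theorem cfiFlipSet_cfiFlip (S : Finset (Fin k)) (hS : Even #S) :
    cfiFlipSet (cfiFlip S hS) = S := by
  ext i
  rw [mem_cfiFlipSet, cfiFlip_inr]
  exact cfiVert_inr_inj.trans (by by_cases hi : i ∈ S <;> simp [hi])

namespace IsCFIAut

variable {π : Equiv.Perm (CFIVert k)}

theorem exists_apply_inr (h : IsCFIAut π) (i : Fin k) (t : Bool) :
    ∃ u, π (Sum.inr (i, t)) = Sum.inr (i, u) := by
  have hc := h.2 (Sum.inr (i, t))
  rcases hπ : π (Sum.inr (i, t)) with _ | ⟨j, u⟩ <;> rw [hπ] at hc <;> cases hc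
  exact ⟨u, rfl⟩

theorem apply_inr (h : IsCFIAut π) (i : Fin k) (t : Bool) :
    π (Sum.inr (i, t)) = Sum.inr (i, if i ∈ cfiFlipSet π then !t else t) := by
  choose g hg using h.exists_apply_inr i
  have g_inj : Function.Injective g := fun t u htu =>
    (Prod.ext_iff.1 (Sum.inr_injective (π.injective ((hg t).trans (htu ▸ hg u).symm)))).2
  have hmem : i ∈ cfiFlipSet π ↔ g false = true := by
    rw [mem_cfiFlipSet, hg]
    exact cfiVert_inr_inj.trans (by simp)
  simp only [hg, hmem]
  rw [Bool.apply_eq_ite_of_injective g_inj t]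

theorem exists_apply_inl (h : IsCFIAut π) (b : {b : Fin k → Bool // Even (bitWeight b)}) :
    ∃ c, π (Sum.inl b) = Sum.inl c ∧ c.1 = flipBits (cfiFlipSet π) b.1 := by
  have hc := h.2 (Sum.inl b)
  rcases hπ : π (Sum.inl b) with c | p <;> rw [hπ] at hc
  · refine ⟨c, rfl, funext fun i => ?_⟩
    have hadj := (h.1 (Sum.inl b) (Sum.inr (i, b.1 i))).2 rfl
    rwa [hπ, h.apply_inr] at hadj
  · cases hc

theorem even_card_cfiFlipSet (h : IsCFIAut π) : Even #(cfiFlipSet π) := by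
  obtain ⟨c, -, hc⟩ := h.exists_apply_inl ⟨fun _ => false, by simp [bitWeight]⟩
  simpa [hc, even_bitWeight_flipBits_iff, bitWeight, flipBits] using c.2

theorem eq_cfiFlip (h : IsCFIAut π) : π = cfiFlip (cfiFlipSet π) h.even_card_cfiFlipSet := by
  ext1 x
  rcases x with b | ⟨i, t⟩
  · obtain ⟨c, hπ, hc⟩ := h.exists_apply_inl b
    rw [hπ, cfiFlip_inl]
    exact congrArg Sum.inl (Subtype.ext hc)
  · rw [h.apply_inr, cfiFlip_inr]

end IsCFIAut

end CFI

noncomputable def cfiAutEquiv (k : ℕ) :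
    {π : Equiv.Perm (CFIVert k) // IsCFIAut π} ≃ {S : Finset (Fin k) // Even #S} where
  toFun π := ⟨cfiFlipSet π.1, π.2.even_card_cfiFlipSet⟩
  invFun S := ⟨cfiFlip S.1 S.2, isCFIAut_cfiFlip S.1 S.2⟩
  left_inv π := Subtype.ext π.2.eq_cfiFlip.symm
  right_inv S := Subtype.ext (cfiFlipSet_cfiFlip S.1 S.2)

/-- Every color-preserving automorphism of χ_k is determined by an even-cardinality
subset S ⊆ [k] (it swaps a_i and b_i exactly for i ∈ S); conversely every
even-cardinality S determines such an automorphism; hence χ_k has exactly 2^(k-1)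
such automorphisms. -/
theorem cfi_block_automorphisms (k : ℕ) :
    (∀ π : Equiv.Perm (CFIVert k), IsCFIAut π →
      ∃ S : Finset (Fin k), Even S.card ∧
        ∀ (i : Fin k) (t : Bool),
          π (Sum.inr (i, t)) = Sum.inr (i, if i ∈ S then !t else t)) ∧
    (∀ S : Finset (Fin k), Even S.card →
      ∃ π : Equiv.Perm (CFIVert k), IsCFIAut π ∧
        ∀ (i : Fin k) (t : Bool),
          π (Sum.inr (i, t)) = Sum.inr (i, if i ∈ S then !t else t)) ∧
    Nat.card {π : Equiv.Perm (CFIVert k) // IsCFIAut π} = 2 ^ (k - 1) := by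
  refine ⟨fun π h => ⟨cfiFlipSet π, h.even_card_cfiFlipSet, h.apply_inr⟩,
    fun S hS => ⟨cfiFlip S hS, isCFIAut_cfiFlip S hS, cfiFlip_inr S hS⟩, ?_⟩
  rw [Nat.card_congr (cfiAutEquiv k), Nat.card_eq_fintype_card, Fintype.card_even_card_finset,
    Fintype.card_fin]
end

section
/- Let c: V^k × V^l → C be tuple colors on a graph G. For any index tuple a ∈ [k]^h with strictly increasing distinct entries (h ≤ k), if a coloring satisfies the k-WL update rule with injective hash, then after h additional iterations the color of a tuple v determines the multiset {{c^t(ψ_a(v, u)) : u ∈ V^h}}, where ψ_a(v,u) replaces the entries of v at positions a by the entries of u. (Lemma: h rounds of k-WL updates recover multisets over h-fold replacements.) -/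
/-!
Replacing the positions `a 0, …, a h` of `v` by `u` is the same as first setting `v (a 0) := u 0`
and then replacing the remaining `h` positions by `Fin.tail u`. Hence the multiset of colours over
all `(h+1)`-fold replacements is the union, over `w`, of the multisets of `h`-fold replacements of
`update v (a 0) w`. By induction the latter is a function of `c^{t+h} (update v (a 0) w)`, and one
more round of `k`-WL makes the multiset of these colours over `w` a function of `c^{t+h+1} v`.
-/

open Function Finset

/-- `multiReplace a v u` replaces the entries of `v` at the positions `a` by the
entries of `u` (the generalized replacement ψ_a(v, u)). -/
noncomputable def multiReplace {V : Type} {k h : ℕ} (a : Fin h → Fin k)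
    (v : Fin k → V) (u : Fin h → V) : Fin k → V :=
  fun j => if hj : ∃ i, a i = j then u hj.choose else v j

lemma Function.FactorsThrough.multiset_map {α β γ : Type*} {f : α → β} {g : α → γ}
    (hf : g.FactorsThrough f) : (Multiset.map g).FactorsThrough (Multiset.map f) := by
  intro s s' hs
  cases isEmpty_or_nonempty γ
  · have : IsEmpty α := ⟨fun a => isEmptyElim (g a)⟩
    rw [Subsingleton.elim s s']
  · inhabit γ
    have hg : g = extend f g default ∘ f := funext fun a => (hf.extend_apply default a).symm
    rw [hg, ← Multiset.map_map, ← Multiset.map_map, hs]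

lemma Finset.univ_val_map_fin_cons {α γ : Type*} [Fintype α] {n : ℕ}
    (F : (Fin (n + 1) → α) → γ) :
    (univ : Finset (Fin (n + 1) → α)).val.map F =
      (univ : Finset α).val.bind
        fun x => (univ : Finset (Fin n → α)).val.map fun u => F (Fin.cons x u) := by
  rw [← map_univ_equiv (Fin.consEquiv fun _ => α), map_val, Multiset.map_map,
    ← univ_product_univ, product_val]
  simp [SProd.sprod, Multiset.product, Multiset.map_bind, Fin.consEquiv]

section multiReplace

variable {V : Type} {k h : ℕ} {a : Fin h → Fin k} {v : Fin k → V} {u : Fin h → V}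

lemma multiReplace_apply_self (ha : Injective a) (i : Fin h) : multiReplace a v u (a i) = u i := by
  have hj : ∃ i', a i' = a i := ⟨i, rfl⟩
  rw [multiReplace, dif_pos hj, ha hj.choose_spec]

lemma multiReplace_apply_of_forall_ne {j : Fin k} (hj : ∀ i, a i ≠ j) :
    multiReplace a v u j = v j := by
  rw [multiReplace, dif_neg (not_exists.mpr hj)]

lemma multiReplace_of_isEmpty [IsEmpty (Fin h)] : multiReplace a v u = v :=
  funext fun _ => multiReplace_apply_of_forall_ne isEmptyElim

lemma multiReplace_cons {a : Fin (h + 1) → Fin k} (ha : Injective a) (w : V) (u : Fin h → V) :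
    multiReplace a v (Fin.cons w u) = multiReplace (a ∘ Fin.succ) (update v (a 0) w) u := by
  have ha' : Injective (a ∘ Fin.succ) := ha.comp (Fin.succ_injective h)
  funext j
  by_cases hj : ∃ i, a i = j
  · obtain ⟨i, rfl⟩ := hj
    cases i using Fin.cases with
    | zero =>
      rw [multiReplace_apply_self ha, Fin.cons_zero,
        multiReplace_apply_of_forall_ne (a := a ∘ Fin.succ) fun i h => Fin.succ_ne_zero i (ha h),
        update_self]
    | succ i =>
      rw [multiReplace_apply_self ha, Fin.cons_succ]
      exact (multiReplace_apply_self ha' i).symm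
  · simp only [not_exists] at hj
    rw [multiReplace_apply_of_forall_ne hj,
      multiReplace_apply_of_forall_ne (a := a ∘ Fin.succ) fun i => hj i.succ,
      update_of_ne (Ne.symm (hj 0))]

end multiReplace

variable {V C : Type} [Fintype V] {k : ℕ}

noncomputable def replacementMultiset {h : ℕ} (f : (Fin k → V) → C) (a : Fin h → Fin k)
    (v : Fin k → V) : Multiset C :=
  (univ : Finset (Fin h → V)).val.map fun u => f (multiReplace a v u)

lemma replacementMultiset_succ {h : ℕ} (f : (Fin k → V) → C) {a : Fin (h + 1) → Fin k}
    (ha : Injective a) (v : Fin k → V) :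
    replacementMultiset f a v =
      (univ : Finset V).val.bind
        fun w => replacementMultiset f (a ∘ Fin.succ) (update v (a 0) w) := by
  simp only [replacementMultiset, univ_val_map_fin_cons, multiReplace_cons ha]

theorem factorsThrough_replacementMultiset (c : ℕ → (Fin k → V) → C)
    (hstep : ∀ t i, FactorsThrough
      (fun u => (univ : Finset V).val.map fun w => c t (update u i w)) (c (t + 1))) :
    ∀ {h : ℕ} (a : Fin h → Fin k), Injective a → ∀ t,
      (replacementMultiset (c t) a).FactorsThrough (c (t + h))
  | 0, a, _, t, v, v', hv => by
    simp only [replacementMultiset, multiReplace_of_isEmpty, Multiset.map_const']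
    exact congrArg (Multiset.replicate _) hv
  | h + 1, a, ha, t, v, v', hv => by
    have ih := factorsThrough_replacementMultiset c hstep (a ∘ Fin.succ)
      (ha.comp (Fin.succ_injective h)) t
    have hnbr := hstep (t + h) (a 0) hv
    rw [replacementMultiset_succ _ ha, replacementMultiset_succ _ ha, Multiset.bind, Multiset.bind]
    congr 1
    have hcol : (univ.val.map (update v (a 0))).map (c (t + h)) =
        (univ.val.map (update v' (a 0))).map (c (t + h)) := by
      simpa only [Multiset.map_map, comp_def] using hnbr
    simpa only [Multiset.map_map, comp_def] using ih.multiset_map hcol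

theorem kWL_multiset_recovery_general {V C : Type} [Fintype V] (k h : ℕ)
    (c : ℕ → (Fin k → V) → C)
    (hupd : ∀ (t : ℕ) (u₁ u₂ : Fin k → V),
      c (t + 1) u₁ = c (t + 1) u₂ ↔
        (c t u₁ = c t u₂ ∧ ∀ i : Fin k,
          (Finset.univ : Finset V).val.map (fun w => c t (Function.update u₁ i w)) =
            (Finset.univ : Finset V).val.map (fun w => c t (Function.update u₂ i w))))
    (a : Fin h → Fin k) (ha : StrictMono a) :
    ∀ t : ℕ, ∃ φ : C → Multiset C, ∀ v : Fin k → V,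
      φ (c (t + h) v) =
        (Finset.univ : Finset (Fin h → V)).val.map
          (fun u => c t (multiReplace a v u)) := by
  have hstep : ∀ s i, FactorsThrough
      (fun u => (univ : Finset V).val.map fun w => c s (update u i w)) (c (s + 1)) :=
    fun s i _ _ hu => ((hupd s _ _).mp hu).2 i
  intro t
  exact ⟨extend (c (t + h)) (replacementMultiset (c t) a) fun _ => 0,
    (factorsThrough_replacementMultiset c hstep a ha.injective t).extend_apply _⟩

/-- If a coloring of k-tuples satisfies the k-WL update rule with injective hash, then
for any strictly increasing index tuple `a ∈ [k]^h` (0 < h ≤ k), after h additional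
iterations the color of a tuple v determines the multiset
`{{c^t(ψ_a(v, u)) : u ∈ V^h}}` of colors of h-fold replacements. -/
theorem kWL_multiset_recovery {V C : Type} [Fintype V] [DecidableEq V] (k h : ℕ)
    (hh : 0 < h) (hhk : h ≤ k)
    (c : ℕ → (Fin k → V) → C)
    (hupd : ∀ (t : ℕ) (u₁ u₂ : Fin k → V),
      c (t + 1) u₁ = c (t + 1) u₂ ↔
        (c t u₁ = c t u₂ ∧ ∀ i : Fin k,
          (Finset.univ : Finset V).val.map (fun w => c t (Function.update u₁ i w)) =
            (Finset.univ : Finset V).val.map (fun w => c t (Function.update u₂ i w))))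
    (a : Fin h → Fin k) (ha : StrictMono a) :
    ∀ t : ℕ, ∃ φ : C → Multiset C, ∀ v : Fin k → V,
      φ (c (t + h) v) =
        (Finset.univ : Finset (Fin h → V)).val.map
          (fun u => c t (multiReplace a v u)) :=
  kWL_multiset_recovery_general k h c hupd a ha
end
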